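/- arXiv:1712.01070 — 8 statements merged into one kernel-verified Lean document; each statement's English description precedes it below -/
import Mathlib

section
/- Let A ∈ M_n(ℂ) and z ∈ F_N(A). Then |z| = 1 if and only if z = λ/|λ| for some eigenvalue λ of A (with λ ≠ 0). -/
open Matrix

noncomputable def fN {n : ℕ} (A : Matrix (Fin n) (Fin n) ℂ)
    (x : EuclideanSpace ℂ (Fin n)) : ℂ :=
  (inner ℂ x (Matrix.toEuclideanLin A x) : ℂ) /
    ((‖x‖ * ‖Matrix.toEuclideanLin A x‖ : ℝ) : ℂ)

noncomputable def FN {n : ℕ} (A : Matrix (Fin n) (Fin n) ℂ) : Set ℂ :=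
  {z | ∃ x : EuclideanSpace ℂ (Fin n), Matrix.toEuclideanLin A x ≠ 0 ∧ z = fN A x}

/-! If `‖z‖ = 1` for `z = ⟪x, Ax⟫ / (‖x‖ ‖Ax‖)`, the Cauchy–Schwarz inequality is an equality, so
`Ax = λ x` with `λ ≠ 0` an eigenvalue, and then `z = λ ‖x‖² / (‖x‖ · |λ| ‖x‖) = λ / |λ|`. -/

section fN

variable {n : ℕ} {A : Matrix (Fin n) (Fin n) ℂ} {x : EuclideanSpace ℂ (Fin n)}

lemma norm_fN_eq_one_iff :
    ‖fN A x‖ = 1 ↔ x ≠ 0 ∧ ∃ r : ℂ, r ≠ 0 ∧ toEuclideanLin A x = r • x := by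
  rw [fN, Complex.ofReal_mul]
  exact norm_inner_div_norm_mul_norm_eq_one_iff _ _

lemma fN_of_toEuclideanLin_eq_smul {r : ℂ} (hx : x ≠ 0) (hAx : toEuclideanLin A x = r • x) :
    fN A x = r / (‖r‖ : ℂ) := by
  have hx' : (‖x‖ : ℂ) ≠ 0 := by simpa using hx
  rw [fN, hAx, inner_smul_right, inner_self_eq_norm_sq_to_K, RCLike.ofReal_eq_complex_ofReal,
    norm_smul]
  push_cast
  field_simp

end fN

lemma mem_spectrum_of_toEuclideanLin_eq_smul {𝕜 ι : Type*} [RCLike 𝕜] [Fintype ι]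
    [DecidableEq ι] {A : Matrix ι ι 𝕜} {x : EuclideanSpace 𝕜 ι} {r : 𝕜} (hx : x ≠ 0)
    (hAx : toEuclideanLin A x = r • x) : r ∈ spectrum 𝕜 A := by
  rw [← spectrum_toLpLin 2]
  exact Module.End.hasEigenvalue_iff_mem_spectrum.1 <|
    Module.End.hasEigenvalue_of_hasEigenvector ⟨Module.End.mem_eigenspace_iff.2 hAx, hx⟩

theorem stmt1 {n : ℕ} (A : Matrix (Fin n) (Fin n) ℂ) (z : ℂ) (hz : z ∈ FN A) :
    ‖z‖ = 1 ↔
      ∃ lam : ℂ, lam ∈ spectrum ℂ A ∧ lam ≠ 0 ∧ z = lam / ((‖lam‖ : ℝ) : ℂ) := by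
  obtain ⟨x, -, rfl⟩ := hz
  constructor
  · intro h
    obtain ⟨hx, r, hr, hAx⟩ := norm_fN_eq_one_iff.1 h
    exact ⟨r, mem_spectrum_of_toEuclideanLin_eq_smul hx hAx, hr,
      fN_of_toEuclideanLin_eq_smul hx hAx⟩
  · rintro ⟨lam, -, hlam, h⟩
    simp [h, hlam]
end

section
/- If A ∈ M_n(ℂ) is invertible, then F_N(A) is a closed subset of ℂ. -/
open Matrix

/-! Since `fN A` is invariant under positive scaling, `FN A` is the image of the unit sphere; when
`A` is invertible, `fN A` is continuous there, so `FN A` is the continuous image of a compact set. -/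

lemma image_compl_zero_eq_image_sphere {E α : Type*} [NormedAddCommGroup E] [NormedSpace ℝ E]
    {f : E → α} (hf : ∀ c : ℝ, 0 < c → ∀ x, f (c • x) = f x) :
    f '' {0}ᶜ = f '' Metric.sphere 0 1 := by
  apply Set.Subset.antisymm
  · rintro _ ⟨x, hx, rfl⟩
    have hx : 0 < ‖x‖ := norm_pos_iff.2 hx
    refine ⟨‖x‖⁻¹ • x, ?_, hf _ (inv_pos.2 hx) x⟩
    simp [norm_smul, hx.ne']
  · exact Set.image_mono fun x hx => Metric.ne_of_mem_sphere hx one_ne_zero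

section

variable {n : ℕ} (A : Matrix (Fin n) (Fin n) ℂ)

lemma FN_eq_image : FN A = fN A '' {x | toEuclideanLin A x ≠ 0} := by
  ext z
  exact ⟨fun ⟨x, hx, hz⟩ => ⟨x, hx, hz.symm⟩, fun ⟨x, hx, hz⟩ => ⟨x, hx, hz.symm⟩⟩

lemma fN_smul_of_pos {c : ℝ} (hc : 0 < c) (x : EuclideanSpace ℂ (Fin n)) :
    fN A (c • x) = fN A x := by
  simp only [fN, LinearMap.map_smul_of_tower, ← Complex.coe_smul, inner_smul_left,
    inner_smul_right, Complex.conj_ofReal, norm_smul, Complex.norm_real, Real.norm_of_nonneg hc.le]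
  have hc' : (c : ℂ) ≠ 0 := Complex.ofReal_ne_zero.2 hc.ne'
  push_cast
  field_simp

lemma continuousOn_fN : ContinuousOn (fN A) {x | toEuclideanLin A x ≠ 0} := by
  have hA : Continuous (toEuclideanLin A) := LinearMap.continuous_of_finiteDimensional _
  refine ContinuousOn.div (by fun_prop) (by fun_prop) fun x hx => ?_
  have hx0 : x ≠ 0 := fun h => hx (by simp [h])
  simpa [hx0] using hx

lemma toEuclideanLin_injective_of_isUnit (hA : IsUnit A) :
    Function.Injective (toEuclideanLin A) :=
  WithLp.toLp_injective 2 |>.comp (mulVec_injective_iff_isUnit.2 hA) |>.comp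
    (WithLp.ofLp_injective 2)

end

theorem stmt5 {n : ℕ} (A : Matrix (Fin n) (Fin n) ℂ) (hA : IsUnit A) :
    IsClosed (FN A) := by
  have hker : {x | toEuclideanLin A x ≠ 0} = {0}ᶜ := by
    ext x
    exact (toEuclideanLin_injective_of_isUnit A hA).ne_iff' (map_zero _)
  have hFN : FN A = fN A '' Metric.sphere 0 1 := by
    rw [FN_eq_image, hker, image_compl_zero_eq_image_sphere fun _ => fN_smul_of_pos A]
  have hcont : ContinuousOn (fN A) (Metric.sphere 0 1) :=
    (continuousOn_fN A).mono fun x hx => hker ▸ Metric.ne_of_mem_sphere hx one_ne_zero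
  rw [hFN]
  exact ((isCompact_sphere 0 1).image_of_continuousOn hcont).isClosed
end

section
/- Let v, w ∈ ℝ³ with v_3, w_3 > 0 and v_3 ≠ w_3, and let h(u) = (u_1 + i u_2)/√u_3. Then the image under h of the open line segment from v to w is an arc of a (possibly degenerate) hyperbola centered at the origin; concretely, it can be parametrized as (a+bi)/t + (c+di)t for t in an interval of positive reals, for suitable real constants a, b, c, d. -/
noncomputable def hmap (v : ℝ × ℝ × ℝ) : ℂ :=
  ((v.1 : ℂ) + (v.2.1 : ℂ) * Complex.I) / ((Real.sqrt v.2.2 : ℝ) : ℂ)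

private lemma calc1 (u₁ u₂ a b c d t : ℝ) (ht : t ≠ 0) (h1 : u₁ = a + c*t^2)
    (h2 : u₂ = b + d*t^2) :
    ((u₁:ℂ) + (u₂:ℂ)*Complex.I)/(t:ℂ)
      = ((a:ℂ)+(b:ℂ)*Complex.I)/(t:ℂ) + ((c:ℂ)+(d:ℂ)*Complex.I)*(t:ℂ) := by
  have ht' : (t:ℂ) ≠ 0 := Complex.ofReal_ne_zero.mpr ht
  subst h1; subst h2
  push_cast
  field_simp
  ring

private lemma calc2 (x y v3 w3 s : ℝ) (he : w3 - v3 ≠ 0) :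
    (1-s)*x + s*y = (x - v3*(y-x)/(w3-v3)) + ((y-x)/(w3-v3)) * ((1-s)*v3 + s*w3) := by
  field_simp
  ring

theorem stmt12 (v w : ℝ × ℝ × ℝ) (hv : 0 < v.2.2) (hw : 0 < w.2.2)
    (hne : v.2.2 ≠ w.2.2) :
    ∃ a b c d t₁ t₂ : ℝ, 0 < t₁ ∧ t₁ < t₂ ∧
      hmap '' openSegment ℝ v w =
        {z : ℂ | ∃ t : ℝ, t ∈ Set.Ioo t₁ t₂ ∧
          z = ((a : ℂ) + (b : ℂ) * Complex.I) / (t : ℂ) +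
              ((c : ℂ) + (d : ℂ) * Complex.I) * (t : ℂ)} := by
  have he0 : w.2.2 - v.2.2 ≠ 0 := sub_ne_zero.mpr (Ne.symm hne)
  refine ⟨v.1 - v.2.2 * (w.1 - v.1) / (w.2.2 - v.2.2),
    v.2.1 - v.2.2 * (w.2.1 - v.2.1) / (w.2.2 - v.2.2),
    (w.1 - v.1) / (w.2.2 - v.2.2), (w.2.1 - v.2.1) / (w.2.2 - v.2.2),
    min (Real.sqrt v.2.2) (Real.sqrt w.2.2), max (Real.sqrt v.2.2) (Real.sqrt w.2.2),
    lt_min (Real.sqrt_pos.mpr hv) (Real.sqrt_pos.mpr hw),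
    min_lt_max.mpr (fun h => hne ((Real.sqrt_inj hv.le hw.le).mp h)), ?_⟩
  ext z
  simp only [Set.mem_image, Set.mem_setOf_eq, openSegment_eq_image, Set.mem_Ioo]
  constructor
  · rintro ⟨u, ⟨s, hs, rfl⟩, rfl⟩
    have hs0 : 0 < s := hs.1
    have hs1 : s < 1 := hs.2
    have hu3pos : 0 < (1-s)*v.2.2 + s*w.2.2 :=
      add_pos (mul_pos (by linarith) hv) (mul_pos hs0 hw)
    refine ⟨Real.sqrt ((1-s)*v.2.2 + s*w.2.2), ⟨?_, ?_⟩, ?_⟩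
    · rcases lt_or_gt_of_ne hne with h | h
      · exact (min_le_left _ _).trans_lt
          (Real.sqrt_lt_sqrt hv.le (by nlinarith))
      · exact (min_le_right _ _).trans_lt
          (Real.sqrt_lt_sqrt hw.le (by nlinarith))
    · rcases lt_or_gt_of_ne hne with h | h
      · exact (Real.sqrt_lt_sqrt hu3pos.le (by nlinarith)).trans_le (le_max_right _ _)
      · exact (Real.sqrt_lt_sqrt hu3pos.le (by nlinarith)).trans_le (le_max_left _ _)
    · have ht2 : (Real.sqrt ((1-s)*v.2.2 + s*w.2.2))^2 = (1-s)*v.2.2 + s*w.2.2 :=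
        Real.sq_sqrt hu3pos.le
      have h1 : ((1-s)•v + s•w).1
          = (v.1 - v.2.2 * (w.1 - v.1) / (w.2.2 - v.2.2))
            + (w.1 - v.1) / (w.2.2 - v.2.2) * (Real.sqrt ((1-s)*v.2.2 + s*w.2.2))^2 := by
        rw [ht2]; exact calc2 v.1 w.1 v.2.2 w.2.2 s he0
      have h2 : ((1-s)•v + s•w).2.1
          = (v.2.1 - v.2.2 * (w.2.1 - v.2.1) / (w.2.2 - v.2.2))
            + (w.2.1 - v.2.1) / (w.2.2 - v.2.2) * (Real.sqrt ((1-s)*v.2.2 + s*w.2.2))^2 := by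
        rw [ht2]; exact calc2 v.2.1 w.2.1 v.2.2 w.2.2 s he0
      exact calc1 _ _ _ _ _ _ _ (Real.sqrt_pos.mpr hu3pos).ne' h1 h2
  · rintro ⟨t, ⟨ht1, ht2⟩, rfl⟩
    have htpos : 0 < t :=
      (lt_min (Real.sqrt_pos.mpr hv) (Real.sqrt_pos.mpr hw)).trans ht1
    set s := (t^2 - v.2.2) / (w.2.2 - v.2.2) with hsdef
    have hbnd : 0 < s ∧ s < 1 := by
      rcases lt_or_gt_of_ne hne with h | h
      · have hmin : min (Real.sqrt v.2.2) (Real.sqrt w.2.2) = Real.sqrt v.2.2 :=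
          min_eq_left (Real.sqrt_le_sqrt h.le)
        have hmax : max (Real.sqrt v.2.2) (Real.sqrt w.2.2) = Real.sqrt w.2.2 :=
          max_eq_right (Real.sqrt_le_sqrt h.le)
        rw [hmin] at ht1; rw [hmax] at ht2
        have e1 : v.2.2 < t^2 := by
          calc v.2.2 = (Real.sqrt v.2.2)^2 := (Real.sq_sqrt hv.le).symm
          _ < t^2 := by nlinarith [Real.sqrt_nonneg v.2.2]
        have e2 : t^2 < w.2.2 := by
          calc t^2 < (Real.sqrt w.2.2)^2 := by nlinarith
          _ = w.2.2 := Real.sq_sqrt hw.le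
        constructor
        · exact div_pos (by linarith) (by linarith)
        · rw [div_lt_one (by linarith)]; linarith
      · have hmin : min (Real.sqrt v.2.2) (Real.sqrt w.2.2) = Real.sqrt w.2.2 :=
          min_eq_right (Real.sqrt_le_sqrt h.le)
        have hmax : max (Real.sqrt v.2.2) (Real.sqrt w.2.2) = Real.sqrt v.2.2 :=
          max_eq_left (Real.sqrt_le_sqrt h.le)
        rw [hmin] at ht1; rw [hmax] at ht2
        have e1 : w.2.2 < t^2 := by
          calc w.2.2 = (Real.sqrt w.2.2)^2 := (Real.sq_sqrt hw.le).symm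
          _ < t^2 := by nlinarith [Real.sqrt_nonneg w.2.2]
        have e2 : t^2 < v.2.2 := by
          calc t^2 < (Real.sqrt v.2.2)^2 := by nlinarith
          _ = v.2.2 := Real.sq_sqrt hv.le
        constructor
        · exact div_pos_iff.mpr (Or.inr ⟨by linarith, by linarith⟩)
        · rw [hsdef, div_lt_one_iff]
          exact Or.inr (Or.inr ⟨by linarith, by linarith⟩)
    have hu3 : (1-s)*v.2.2 + s*w.2.2 = t^2 := by
      rw [hsdef]; field_simp; ring
    refine ⟨(1-s)•v + s•w, ⟨s, ⟨hbnd.1, hbnd.2⟩, rfl⟩, ?_⟩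
    have h1 : ((1-s)•v + s•w).1
        = (v.1 - v.2.2 * (w.1 - v.1) / (w.2.2 - v.2.2))
          + (w.1 - v.1) / (w.2.2 - v.2.2) * t^2 := by
      rw [← hu3]; exact calc2 v.1 w.1 v.2.2 w.2.2 s he0
    have h2 : ((1-s)•v + s•w).2.1
        = (v.2.1 - v.2.2 * (w.2.1 - v.2.1) / (w.2.2 - v.2.2))
          + (w.2.1 - v.2.1) / (w.2.2 - v.2.2) * t^2 := by
      rw [← hu3]; exact calc2 v.2.1 w.2.1 v.2.2 w.2.2 s he0
    have hsq : Real.sqrt (((1-s)•v + s•w).2.2) = t := by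
      show Real.sqrt ((1-s)*v.2.2 + s*w.2.2) = t
      rw [hu3, Real.sqrt_sq htpos.le]
    unfold hmap
    rw [hsq]
    exact calc1 _ _ _ _ _ _ _ htpos.ne' h1 h2
end

section
/- Let A ∈ M_2(ℂ). Every point v = (x*(Re A)x, x*(Im A)x, x*A*Ax) with ‖x‖ = 1 satisfies the quadric equation a_1v_1² + a_2v_2² + v_3² + a_4v_1v_2 + a_5v_1v_3 + a_6v_2v_3 + a_7v_1 + a_8v_2 + a_9v_3 + a_10 = 0, where a_1 = tr(A*A) + 2Re(det A), a_2 = tr(A*A) − 2Re(det A), a_4 = 4 Im(det A), a_5 = −2Re(tr A), a_6 = −2Im(tr A), a_7 = −2Re(det A · tr A*), a_8 = −2Im(det A · tr A*), a_9 = |tr A|² − tr(A*A), a_10 = |det A|². -/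
/-!
Complete `x` to an orthonormal basis `(x, y)` and let `[[z, b], [c, d]]` be the matrix of `A` in
it, so that `z = ⟪x, A x⟫`. Then `d = tr A - z`, `b c = z (tr A - z) - det A`,
`|c|² = ‖A x‖² - |z|²` and `|b|² = tr (A* A) - ‖A x‖² - |tr A - z|²`. The identity
`|b c|² = |b|² |c|²` is the quadric equation, written in terms of `z` and `‖A x‖²`.
-/

open Matrix LinearMap Complex

theorem Matrix.re_trace_conjTranspose_mul_self {n : Type*} [Fintype n] (B : Matrix n n ℂ) :
    (Bᴴ * B).trace.re = ∑ j, ∑ i, normSq (B i j) := by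
  simp [Matrix.trace, Matrix.mul_apply, Complex.re_sum, Complex.mul_re, normSq_apply]

theorem Matrix.normSq_mul_trace_sub_sub_det_fin_two (B : Matrix (Fin 2) (Fin 2) ℂ) :
    normSq (B 0 0 * (B.trace - B 0 0) - B.det) =
      (normSq (B 0 0) + normSq (B 1 0) - normSq (B 0 0)) *
        ((Bᴴ * B).trace.re - (normSq (B 0 0) + normSq (B 1 0)) - normSq (B.trace - B 0 0)) := by
  have hprod : B 0 0 * (B.trace - B 0 0) - B.det = B 1 0 * B 0 1 := by
    rw [trace_fin_two, det_fin_two]; ring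
  have hdiag : B.trace - B 0 0 = B 1 1 := by rw [trace_fin_two]; ring
  rw [hprod, hdiag, re_trace_conjTranspose_mul_self, Fin.sum_univ_two, Fin.sum_univ_two,
    Fin.sum_univ_two, normSq_mul]
  ring

section InnerProductSpace

variable {𝕜 E : Type*} [RCLike 𝕜] [NormedAddCommGroup E] [InnerProductSpace 𝕜 E]

theorem OrthonormalBasis.exists_apply_eq {ι : Type*} [Fintype ι] [FiniteDimensional 𝕜 E]
    (hcard : Module.finrank 𝕜 E = Fintype.card ι) (i : ι) {x : E} (hx : ‖x‖ = 1) :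
    ∃ b : OrthonormalBasis ι 𝕜 E, b i = x := by
  classical
  have hv : Orthonormal 𝕜 (({i} : Set ι).domRestrict fun _ ↦ x) := by
    rw [orthonormal_iff_ite]
    rintro ⟨j, rfl⟩ ⟨k, rfl⟩
    simp [inner_self_eq_norm_sq_to_K, hx]
  obtain ⟨b, hb⟩ := hv.exists_orthonormalBasis_extension_of_card_eq hcard
  exact ⟨b, hb i rfl⟩

variable {ι : Type*} [Fintype ι] [DecidableEq ι]

theorem LinearMap.trace_adjoint_mul_self [FiniteDimensional 𝕜 E] (b : OrthonormalBasis ι 𝕜 E)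
    (f : E →ₗ[𝕜] E) :
    LinearMap.trace 𝕜 E (adjoint f * f) =
      ((toMatrix b.toBasis b.toBasis f)ᴴ * toMatrix b.toBasis b.toBasis f).trace := by
  rw [trace_eq_matrix_trace 𝕜 b.toBasis, toMatrix_mul, toMatrix_adjoint]

theorem OrthonormalBasis.sq_norm_apply (b : OrthonormalBasis ι 𝕜 E) (f : E →ₗ[𝕜] E) (j : ι) :
    ‖f (b j)‖ ^ 2 = ∑ i, ‖toMatrix b.toBasis b.toBasis f i j‖ ^ 2 := by
  simp [← b.sum_sq_norm_inner_right, toMatrix_apply, OrthonormalBasis.repr_apply_apply]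

end InnerProductSpace

theorem LinearMap.normSq_inner_mul_trace_sub_sub_det {E : Type*} [NormedAddCommGroup E]
    [InnerProductSpace ℂ E] [FiniteDimensional ℂ E] (hE : Module.finrank ℂ E = 2)
    (f : E →ₗ[ℂ] E) {x : E} (hx : ‖x‖ = 1) :
    normSq (inner ℂ x (f x) * (trace ℂ E f - inner ℂ x (f x)) - LinearMap.det f) =
      (‖f x‖ ^ 2 - normSq (inner ℂ x (f x))) *
        ((trace ℂ E (adjoint f * f)).re - ‖f x‖ ^ 2 - normSq (trace ℂ E f - inner ℂ x (f x))) := by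
  obtain ⟨b, rfl⟩ := OrthonormalBasis.exists_apply_eq (by simpa using hE) (0 : Fin 2) hx
  set B := toMatrix b.toBasis b.toBasis f
  have hz : inner ℂ (b 0) (f (b 0)) = B 0 0 := (toMatrixOrthonormal_apply_apply b f 0 0).symm
  have hw : ‖f (b 0)‖ ^ 2 = normSq (B 0 0) + normSq (B 1 0) := by
    rw [b.sq_norm_apply, Fin.sum_univ_two, Complex.sq_norm, Complex.sq_norm]
  rw [hz, hw, trace_eq_matrix_trace ℂ b.toBasis, ← det_toMatrix b.toBasis,
    trace_adjoint_mul_self b]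
  exact B.normSq_mul_trace_sub_sub_det_fin_two

theorem stmt13 (A : Matrix (Fin 2) (Fin 2) ℂ)
    (x : EuclideanSpace ℂ (Fin 2)) (hx : ‖x‖ = 1) :
    let v1 := (inner ℂ x (Matrix.toEuclideanLin A x) : ℂ).re
    let v2 := (inner ℂ x (Matrix.toEuclideanLin A x) : ℂ).im
    let v3 := ‖Matrix.toEuclideanLin A x‖ ^ 2
    let a1 := ((Aᴴ * A).trace).re + 2 * A.det.re
    let a2 := ((Aᴴ * A).trace).re - 2 * A.det.re
    let a4 := 4 * A.det.im
    let a5 := -2 * A.trace.re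
    let a6 := -2 * A.trace.im
    let a7 := -2 * (A.det * (starRingEnd ℂ A.trace)).re
    let a8 := -2 * (A.det * (starRingEnd ℂ A.trace)).im
    let a9 := ‖A.trace‖ ^ 2 - ((Aᴴ * A).trace).re
    let a10 := ‖A.det‖ ^ 2
    a1 * v1 ^ 2 + a2 * v2 ^ 2 + v3 ^ 2 + a4 * v1 * v2 + a5 * v1 * v3 +
      a6 * v2 * v3 + a7 * v1 + a8 * v2 + a9 * v3 + a10 = 0 := by
  intro v1 v2 v3 a1 a2 a4 a5 a6 a7 a8 a9 a10
  let e := EuclideanSpace.basisFun (Fin 2) ℂ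
  have hA : toMatrix e.toBasis e.toBasis (toEuclideanLin A) = A := toMatrix_toLin _ _ A
  have key := (toEuclideanLin A).normSq_inner_mul_trace_sub_sub_det finrank_euclideanSpace_fin hx
  rw [trace_eq_matrix_trace ℂ e.toBasis, ← det_toMatrix e.toBasis, trace_adjoint_mul_self e,
    hA] at key
  simp only [v1, v2, v3, a1, a2, a4, a5, a6, a7, a8, a9, a10, Complex.sq_norm, normSq_apply,
    mul_re, mul_im, sub_re, sub_im, conj_re, conj_im] at key ⊢
  linear_combination key
end

section
/- Let A ∈ M_2(ℂ) be invertible. Then F_N(A) is symmetric with respect to reflection across the line in ℂ through the points ±√(det A). In particular, if det A > 0 then z ∈ F_N(A) implies z̄ ∈ F_N(A). -/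
/-!
If `W` is unitary and `A W A = c W` with `c ≠ 0`, then `y = W A x` satisfies `A y = c W x`, so
`⟪y, A y⟫ = c · conj ⟪x, A x⟫`, `‖y‖ = ‖A x‖` and `‖A y‖ = |c| ‖x‖`: the point of `F_N(A)` given
by `y` is `c / |c|` times the conjugate of the one given by `x`, and `z ↦ (c / |c|) z̄` is the
reflection across the line through `±√c`.

For `2 × 2` matrices the polarized Cayley–Hamilton identity
`A W A = tr (W A) A + det A · W - det A · tr W · 1` shows that `c = det A` works for every
traceless `W` with `tr (W A) = 0`. Writing `W = n · σ` in terms of the Pauli matrices, `W` is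
unitary for a real unit vector `n`, and `tr (W A) = 0` says that `n ∈ ℝ³` is orthogonal to two
given vectors, which is always possible.
-/

open Matrix Complex ComplexConjugate

theorem smul_conj_mem_FN_of_mul_mul_eq_smul {n : ℕ} {A W : Matrix (Fin n) (Fin n) ℂ} {c : ℂ}
    (hW : W ∈ unitary (Matrix (Fin n) (Fin n) ℂ)) (hc : c ≠ 0) (hAWA : A * W * A = c • W)
    {z : ℂ} (hz : z ∈ FN A) : c / (‖c‖ : ℂ) * conj z ∈ FN A := by
  obtain ⟨x, hTx, rfl⟩ := hz
  set T := toEuclideanCLM (n := Fin n) (𝕜 := ℂ) A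
  set U := toEuclideanCLM (n := Fin n) (𝕜 := ℂ) W
  have hU : U ∈ unitary _ := Unitary.map_mem _ hW
  have hTUT : T * U * T = c • U := by simp only [T, U, ← map_mul, hAWA, map_smul]
  change T x ≠ 0 at hTx
  have hfN (v) : fN A v = inner ℂ v (T v) / ((‖v‖ * ‖T v‖ : ℝ) : ℂ) := rfl
  have hx : x ≠ 0 := by rintro rfl; simp at hTx
  set y := U (T x)
  have hTy : T y = c • U x := congr($hTUT x)
  have hny : ‖y‖ = ‖T x‖ := U.norm_map_of_mem_unitary hU _
  have hnTy : ‖T y‖ = ‖c‖ * ‖x‖ := by rw [hTy, norm_smul, U.norm_map_of_mem_unitary hU]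
  have hinner : inner ℂ y (T y) = c * conj (inner ℂ x (T x)) := by
    rw [hTy, inner_smul_right, U.inner_map_map_of_mem_unitary hU, inner_conj_symm]
  refine ⟨y, ?_, ?_⟩
  · change T y ≠ 0
    rw [← norm_ne_zero_iff, hnTy]
    positivity
  · rw [hfN, hfN, hinner, hny, hnTy, map_div₀, conj_ofReal]
    push_cast
    ring

theorem Matrix.mul_mul_eq_trace_smul_add_det_smul_sub_fin_two {R : Type*} [CommRing R]
    (A W : Matrix (Fin 2) (Fin 2) R) :
    A * W * A = (W * A).trace • A + A.det • W - (A.det * W.trace) • 1 := by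
  ext i j
  fin_cases i <;> fin_cases j <;>
    simp [mul_apply, Fin.sum_univ_two, trace_fin_two, det_fin_two] <;> ring

theorem exists_norm_eq_one_inner_eq_zero {E : Type*} [NormedAddCommGroup E]
    [InnerProductSpace ℝ E] [FiniteDimensional ℝ E] (hE : 2 < Module.finrank ℝ E) (u v : E) :
    ∃ n : E, ‖n‖ = 1 ∧ inner ℝ u n = 0 ∧ inner ℝ v n = 0 := by
  classical
  set K := Submodule.span ℝ ({u, v} : Set E)
  have hK : Module.finrank ℝ K ≤ 2 := by
    have := finrank_span_finset_le_card (R := ℝ) ({u, v} : Finset E)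
    rw [Set.finrank, Finset.coe_pair] at this
    exact this.trans Finset.card_le_two
  have hKperp : Kᗮ ≠ ⊥ := by
    intro h
    have := K.finrank_add_finrank_orthogonal
    rw [h, finrank_bot] at this
    omega
  obtain ⟨m, hm, hm0⟩ := Submodule.exists_mem_ne_zero_of_ne_bot hKperp
  refine ⟨(‖m‖⁻¹ : ℝ) • m, norm_smul_inv_norm hm0, ?_, ?_⟩ <;>
    rw [real_inner_smul_right, (K.mem_orthogonal m).1 hm _ (Submodule.subset_span (by simp)),
      mul_zero]

/-- `n · σ = n₀ σ₁ + n₁ σ₂ + n₂ σ₃`, where `σᵢ` are the Pauli matrices. -/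
noncomputable def Matrix.pauliDot (n : EuclideanSpace ℝ (Fin 3)) : Matrix (Fin 2) (Fin 2) ℂ :=
  !![(n 2 : ℂ), n 0 - I * n 1; n 0 + I * n 1, -n 2]

theorem Matrix.pauliDot_mem_unitary {n : EuclideanSpace ℝ (Fin 3)} (hn : ‖n‖ = 1) :
    pauliDot n ∈ unitary (Matrix (Fin 2) (Fin 2) ℂ) := by
  have hn' : n 0 ^ 2 + n 1 ^ 2 + n 2 ^ 2 = 1 := by
    have := EuclideanSpace.norm_sq_eq n
    simp only [hn, Fin.sum_univ_three, Real.norm_eq_abs, sq_abs] at this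
    linarith
  have hnC : (n 0 : ℂ) ^ 2 + (n 1 : ℂ) ^ 2 + (n 2 : ℂ) ^ 2 = 1 := by
    rw [← ofReal_one, ← hn']
    push_cast
    ring
  rw [← Matrix.unitaryGroup, mem_unitaryGroup_iff, star_eq_conjTranspose, pauliDot]
  ext i j
  fin_cases i <;> fin_cases j <;> simp [mul_apply, Fin.sum_univ_two] <;>
    [linear_combination hnC - (n 1 : ℂ) ^ 2 * I_sq; ring; ring;
      linear_combination hnC - (n 1 : ℂ) ^ 2 * I_sq]

theorem Matrix.trace_pauliDot (n : EuclideanSpace ℝ (Fin 3)) : (pauliDot n).trace = 0 := by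
  simp [pauliDot, trace_fin_two_of]

theorem Matrix.exists_mem_unitary_trace_eq_zero_trace_mul_eq_zero
    (A : Matrix (Fin 2) (Fin 2) ℂ) :
    ∃ W ∈ unitary (Matrix (Fin 2) (Fin 2) ℂ), W.trace = 0 ∧ (W * A).trace = 0 := by
  let α : Fin 3 → ℂ := ![A 0 1 + A 1 0, I * (A 0 1 - A 1 0), A 0 0 - A 1 1]
  have htrace (n : EuclideanSpace ℝ (Fin 3)) : (pauliDot n * A).trace = ∑ k, (n k : ℂ) * α k := by
    simp [pauliDot, trace_fin_two, vecMul, dotProduct, Fin.sum_univ_two, Fin.sum_univ_three, α]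
    ring
  obtain ⟨n, hn, hre, him⟩ := exists_norm_eq_one_inner_eq_zero (E := EuclideanSpace ℝ (Fin 3))
    (by simp) (WithLp.toLp 2 fun k ↦ (α k).re) (WithLp.toLp 2 fun k ↦ (α k).im)
  refine ⟨pauliDot n, pauliDot_mem_unitary hn, trace_pauliDot n, ?_⟩
  simp only [PiLp.inner_apply, RCLike.inner_apply, conj_trivial] at hre him
  rw [htrace]
  apply Complex.ext <;>
    simpa only [re_sum, im_sum, re_ofReal_mul, im_ofReal_mul, zero_re, zero_im]

theorem stmt14 (A : Matrix (Fin 2) (Fin 2) ℂ) (hA : IsUnit A) :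
    (∀ z ∈ FN A, (A.det / ((‖A.det‖ : ℝ) : ℂ)) * (starRingEnd ℂ z) ∈ FN A) ∧
    (A.det.im = 0 → 0 < A.det.re → ∀ z ∈ FN A, (starRingEnd ℂ z) ∈ FN A) := by
  have hdet : A.det ≠ 0 := ((isUnit_iff_isUnit_det A).mp hA).ne_zero
  obtain ⟨W, hW, hWtr, hWAtr⟩ := exists_mem_unitary_trace_eq_zero_trace_mul_eq_zero A
  have hAWA : A * W * A = A.det • W := by
    simp [mul_mul_eq_trace_smul_add_det_smul_sub_fin_two, hWtr, hWAtr]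
  have hreflect (z) (hz : z ∈ FN A) := smul_conj_mem_FN_of_mul_mul_eq_smul hW hdet hAWA hz
  refine ⟨hreflect, fun him hre z hz ↦ ?_⟩
  have hnorm : ((‖A.det‖ : ℝ) : ℂ) = A.det := by
    have hreal : A.det = (A.det.re : ℂ) := Complex.ext rfl (by simp [him])
    rw [hreal, norm_real, Real.norm_of_nonneg hre.le]
  simpa [hnorm, hdet] using hreflect z hz
end

section
/- Let A ∈ M_2(ℂ) be a nonzero matrix of rank one with tr A = 0. Then F_N(A) is symmetric across every line through the origin; equivalently, F_N(A) is invariant under complex conjugation composed with any rotation, and in fact F_N(A) is a disk centered at the origin (the open unit disk). -/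
open Matrix

/-!
A traceless rank-one matrix factors as `A = u wᵀ` with `w ⬝ᵥ u = 0`, i.e. `A x = ⟪v, x⟫ u` for
`v = w̄ ⟂ u`. Then `|⟪x, A x⟫| / (‖x‖ ‖A x‖) = |⟪x, u⟫| / (‖x‖ ‖u‖)`, which is `< 1` because
`⟪v, x⟫ ≠ 0 = ⟪v, u⟫` keeps `x` off the line of `u`; combining `u` and `v` with suitable weights
reaches every point of the open unit disk. The disk is invariant under conjugation and rotations.
-/

open scoped InnerProductSpace ComplexConjugate

section NormalizedNumericalRange

variable {E : Type*} [NormedAddCommGroup E] [InnerProductSpace ℂ E]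

noncomputable def normalizedNumericalRange (T : E →ₗ[ℂ] E) : Set ℂ :=
  {z | ∃ x, T x ≠ 0 ∧ z = ⟪x, T x⟫_ℂ / ((‖x‖ * ‖T x‖ : ℝ) : ℂ)}

theorem FN_eq_normalizedNumericalRange {n : ℕ} (A : Matrix (Fin n) (Fin n) ℂ) :
    FN A = normalizedNumericalRange (toEuclideanLin A) :=
  rfl

variable {T : E →ₗ[ℂ] E} {u v : E}

/-- Cauchy–Schwarz is strict here: equality would make `u` a multiple of `x`. -/
theorem norm_inner_lt_norm_mul_norm_of_inner_eq_zero (hvu : ⟪v, u⟫_ℂ = 0) {x : E}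
    (hvx : ⟪v, x⟫_ℂ ≠ 0) (hu : u ≠ 0) : ‖⟪x, u⟫_ℂ‖ < ‖x‖ * ‖u‖ := by
  have hx : x ≠ 0 := by rintro rfl; simp at hvx
  refine (norm_inner_le_norm x u).lt_of_ne fun h => ?_
  obtain ⟨r, hr, rfl⟩ := (norm_inner_eq_norm_iff hx hu).mp h
  rw [inner_smul_right] at hvu
  exact mul_ne_zero hr hvx hvu

theorem normalizedNumericalRange_subset_ball (hvu : ⟪v, u⟫_ℂ = 0)
    (hT : ∀ x, T x = ⟪v, x⟫_ℂ • u) : normalizedNumericalRange T ⊆ Metric.ball 0 1 := by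
  rintro _ ⟨x, hx, rfl⟩
  rw [hT] at hx ⊢
  have hvx : ⟪v, x⟫_ℂ ≠ 0 := left_ne_zero_of_smul hx
  have hu : u ≠ 0 := right_ne_zero_of_smul hx
  have hlt := norm_inner_lt_norm_mul_norm_of_inner_eq_zero hvu hvx hu
  have hvx_pos : 0 < ‖⟪v, x⟫_ℂ‖ := norm_pos_iff.mpr hvx
  have hx_pos : 0 < ‖x‖ := norm_pos_iff.mpr (by rintro rfl; simp at hvx)
  rw [mem_ball_zero_iff, inner_smul_right, norm_div, norm_mul, norm_smul, Complex.norm_real,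
    Real.norm_of_nonneg (by positivity), div_lt_one (by positivity)]
  calc ‖⟪v, x⟫_ℂ‖ * ‖⟪x, u⟫_ℂ‖ < ‖⟪v, x⟫_ℂ‖ * (‖x‖ * ‖u‖) := by gcongr
    _ = ‖x‖ * (‖⟪v, x⟫_ℂ‖ * ‖u‖) := by ring

/-- For `‖z‖ < 1` the unit vector `x = conj z • u / ‖u‖ + √(1 - ‖z‖²) • v / ‖v‖` has value `z`. -/
theorem ball_subset_normalizedNumericalRange (hu : u ≠ 0) (hv : v ≠ 0) (hvu : ⟪v, u⟫_ℂ = 0)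
    (hT : ∀ x, T x = ⟪v, x⟫_ℂ • u) : Metric.ball 0 1 ⊆ normalizedNumericalRange T := by
  intro z hz
  rw [mem_ball_zero_iff] at hz
  set R := √(1 - ‖z‖ ^ 2)
  have hR : 0 < R := Real.sqrt_pos.mpr (by nlinarith [norm_nonneg z])
  have hR2 : R ^ 2 = 1 - ‖z‖ ^ 2 := Real.sq_sqrt (by nlinarith [norm_nonneg z])
  have hRc : (R : ℂ) ≠ 0 := by exact_mod_cast hR.ne'
  have hnu : (‖u‖ : ℂ) ≠ 0 := by simpa using hu
  have hnv : (‖v‖ : ℂ) ≠ 0 := by simpa using hv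
  set x := (conj z / ‖u‖) • u + ((R : ℂ) / ‖v‖) • v
  have hvx : ⟪v, x⟫_ℂ = (R * ‖v‖ : ℝ) := by
    simp only [x, inner_add_right, inner_smul_right, hvu, inner_self_eq_norm_sq_to_K,
      RCLike.ofReal_eq_complex_ofReal, mul_zero, zero_add]
    push_cast
    field_simp
  have hxu : ⟪x, u⟫_ℂ = z * ‖u‖ := by
    simp only [x, inner_add_left, inner_smul_left, hvu, inner_self_eq_norm_sq_to_K,
      RCLike.ofReal_eq_complex_ofReal, map_div₀, Complex.conj_conj, Complex.conj_ofReal,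
      mul_zero, add_zero]
    field_simp
  have hx : ‖x‖ = 1 := by
    have hpyth := norm_add_sq_eq_norm_sq_add_norm_sq_of_inner_eq_zero (𝕜 := ℂ) _ _
      (show ⟪(conj z / ‖u‖) • u, ((R : ℂ) / ‖v‖) • v⟫_ℂ = 0 by
        rw [inner_smul_left, inner_smul_right, ← inner_conj_symm, hvu]; simp)
    have hzu : ‖(conj z / ‖u‖) • u‖ = ‖z‖ := by
      rw [norm_smul, norm_div]; simp [hu]
    have hRv : ‖((R : ℂ) / ‖v‖) • v‖ = R := by
      rw [norm_smul, norm_div]; simp [hv, abs_of_pos hR]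
    rw [hzu, hRv] at hpyth
    nlinarith [norm_nonneg x]
  refine ⟨x, ?_, ?_⟩
  · rw [hT, hvx]
    exact smul_ne_zero (by exact_mod_cast (by positivity : (0:ℝ) < R * ‖v‖).ne') hu
  · rw [hT, hvx, inner_smul_right, hxu, norm_smul, hx, Complex.norm_real,
      Real.norm_of_nonneg (by positivity)]
    push_cast
    field_simp

theorem normalizedNumericalRange_eq_ball (hu : u ≠ 0) (hv : v ≠ 0) (hvu : ⟪v, u⟫_ℂ = 0)
    (hT : ∀ x, T x = ⟪v, x⟫_ℂ • u) : normalizedNumericalRange T = Metric.ball 0 1 :=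
  (normalizedNumericalRange_subset_ball hvu hT).antisymm
    (ball_subset_normalizedNumericalRange hu hv hvu hT)

end NormalizedNumericalRange

namespace Matrix

theorem exists_eq_vecMulVec_of_det_eq_zero_of_trace_eq_zero {K : Type*} [Field K]
    {A : Matrix (Fin 2) (Fin 2) K} (hdet : A.det = 0) (htr : A.trace = 0) :
    ∃ u w : Fin 2 → K, w ⬝ᵥ u = 0 ∧ A = vecMulVec u w := by
  rw [det_fin_two] at hdet
  rw [trace_fin_two] at htr
  by_cases hb : A 0 1 = 0
  · have ha : A 0 0 = 0 := pow_eq_zero_iff two_ne_zero |>.mp <| by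
      linear_combination A 0 0 * htr - hdet - A 1 0 * hb
    refine ⟨![0, 1], ![A 1 0, 0], by simp, ?_⟩
    ext i j
    fin_cases i <;> fin_cases j <;> simp [ha, hb]
    linear_combination htr - ha
  · refine ⟨![A 0 1, -A 0 0], ![A 0 0 / A 0 1, 1], by simp [hb], ?_⟩
    ext i j
    fin_cases i <;> fin_cases j <;> simp
    · field_simp
    · field_simp
      linear_combination A 0 0 * htr - hdet
    · linear_combination htr

theorem toEuclideanLin_vecMulVec_apply {𝕜 : Type*} [RCLike 𝕜] {m n : Type*} [Fintype m]
    [Fintype n] [DecidableEq n] (u : m → 𝕜) (w : n → 𝕜) (x : EuclideanSpace 𝕜 n) :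
    toEuclideanLin (vecMulVec u w) x = ⟪WithLp.toLp 2 (star w), x⟫_𝕜 • WithLp.toLp 2 u := by
  rw [toLpLin_apply, vecMulVec_mulVec, EuclideanSpace.inner_eq_star_dotProduct, star_star,
    dotProduct_comm, op_smul_eq_smul, WithLp.toLp_smul]

end Matrix

theorem stmt15 (A : Matrix (Fin 2) (Fin 2) ℂ) (hA : A ≠ 0)
    (hdet : A.det = 0) (htr : A.trace = 0) :
    (∀ θ : ℝ, ∀ z ∈ FN A,
        Complex.exp (2 * θ * Complex.I) * (starRingEnd ℂ z) ∈ FN A) ∧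
      FN A = Metric.ball (0 : ℂ) 1 := by
  obtain ⟨u, w, hwu, rfl⟩ := exists_eq_vecMulVec_of_det_eq_zero_of_trace_eq_zero hdet htr
  obtain ⟨hu, hw⟩ : u ≠ 0 ∧ w ≠ 0 := by simpa [not_or] using hA
  have hball : FN (vecMulVec u w) = Metric.ball 0 1 := by
    rw [FN_eq_normalizedNumericalRange]
    exact normalizedNumericalRange_eq_ball (u := WithLp.toLp 2 u) (v := WithLp.toLp 2 (star w))
      (by simpa) (by simpa)
      (by rw [EuclideanSpace.inner_toLp_toLp, star_star, dotProduct_comm, hwu])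
      (toEuclideanLin_vecMulVec_apply u w)
  refine ⟨fun θ z hz => ?_, hball⟩
  rw [hball, mem_ball_zero_iff] at hz ⊢
  simpa [Complex.norm_exp] using hz
end

section
/- Let A ∈ M_2(ℂ) be nonzero with eigenvalues λ_1, λ_2 satisfying |λ_1| = |λ_2| = 0 (i.e., A is nilpotent and nonzero). Then F_N(A) is the open unit disk {z ∈ ℂ : |z| < 1}. -/
open Matrix

/-!
If `T ∘ T = 0` and `T x ≠ 0`, then `x` and `T x` are linearly independent (`T x = r • x` would
give `r • T x = T (T x) = 0`), so Cauchy–Schwarz is strict and every value of the normalized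
numerical range has modulus `< 1`. Conversely, take `w` with `T w ≠ 0` and `T w ⟂ w`. Since
`T (T w) = 0`, the vector `x = c • T w + w` has value `conj c * ‖T w‖ / √(‖c‖² ‖T w‖² + ‖w‖²)`,
and these values fill the open unit ball as `c` ranges over the scalars.
-/

open scoped InnerProductSpace ComplexConjugate

namespace LinearMap

variable {𝕜 E : Type*} [RCLike 𝕜] [NormedAddCommGroup E] [InnerProductSpace 𝕜 E]

noncomputable def normalizedInner (T : E →ₗ[𝕜] E) (x : E) : 𝕜 :=
  ⟪x, T x⟫_𝕜 / ((‖x‖ * ‖T x‖ : ℝ) : 𝕜)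

def normalizedNumericalRange (T : E →ₗ[𝕜] E) : Set 𝕜 :=
  {z | ∃ x, T x ≠ 0 ∧ z = T.normalizedInner x}

variable {T : E →ₗ[𝕜] E}

theorem norm_inner_apply_lt (hT : T ∘ₗ T = 0) {x : E} (hx : T x ≠ 0) :
    ‖⟪x, T x⟫_𝕜‖ < ‖x‖ * ‖T x‖ := by
  refine (norm_inner_le_norm x (T x)).lt_of_ne fun h => ?_
  obtain ⟨r, hr, hrx⟩ := (norm_inner_eq_norm_iff (ne_zero_of_map hx) hx).1 h
  have : r • T x = 0 := by rw [← map_smul, ← hrx]; exact LinearMap.congr_fun hT x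
  exact hx ((smul_eq_zero_iff_right hr).1 this)

theorem norm_normalizedInner_lt_one (hT : T ∘ₗ T = 0) {x : E} (hx : T x ≠ 0) :
    ‖T.normalizedInner x‖ < 1 := by
  have hpos : 0 < ‖x‖ * ‖T x‖ := mul_pos (norm_pos_iff.2 (ne_zero_of_map hx)) (norm_pos_iff.2 hx)
  rw [normalizedInner, norm_div, RCLike.norm_ofReal, abs_of_pos hpos, div_lt_one hpos]
  exact norm_inner_apply_lt hT hx

/-- Remove from `v` its component along `T v`. -/
theorem exists_apply_ne_zero_inner_eq_zero (hT : T ∘ₗ T = 0) (hT0 : T ≠ 0) :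
    ∃ w, T w ≠ 0 ∧ ⟪T w, w⟫_𝕜 = 0 := by
  obtain ⟨v, hv⟩ : ∃ v, T v ≠ 0 := by
    by_contra! h
    exact hT0 (LinearMap.ext h)
  have hTTv : T (T v) = 0 := LinearMap.congr_fun hT v
  refine ⟨v - (⟪T v, v⟫_𝕜 / ⟪T v, T v⟫_𝕜) • T v, ?_, ?_⟩
  · simpa [hTTv] using hv
  · rw [map_sub, map_smul, hTTv, smul_zero, sub_zero, inner_sub_right, inner_smul_right,
      div_mul_cancel₀ _ (inner_self_ne_zero.2 hv), sub_self]

theorem apply_smul_apply_add (hT : T ∘ₗ T = 0) (c : 𝕜) (w : E) : T (c • T w + w) = T w := by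
  have hTTw : T (T w) = 0 := LinearMap.congr_fun hT w
  rw [map_add, map_smul, hTTw, smul_zero, zero_add]

theorem norm_smul_apply_add_sq {w : E} (hTw : ⟪T w, w⟫_𝕜 = 0) (c : 𝕜) :
    ‖c • T w + w‖ ^ 2 = ‖c‖ ^ 2 * ‖T w‖ ^ 2 + ‖w‖ ^ 2 := by
  have h := norm_add_sq_eq_norm_sq_add_norm_sq_of_inner_eq_zero (c • T w) w
    (by rw [inner_smul_left, hTw, mul_zero])
  rw [sq, sq, sq, h, norm_smul]
  ring

theorem normalizedInner_smul_apply_add (hT : T ∘ₗ T = 0) {w : E}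
    (hTw : ⟪T w, w⟫_𝕜 = 0) (c : 𝕜) :
    T.normalizedInner (c • T w + w) = conj c * ‖T w‖ / ‖c • T w + w‖ := by
  have hwTw : ⟪w, T w⟫_𝕜 = 0 := by rw [← inner_conj_symm, hTw, map_zero]
  rw [normalizedInner, apply_smul_apply_add hT, inner_add_left, inner_smul_left, hwTw, add_zero,
    inner_self_eq_norm_sq_to_K]
  push_cast
  field_simp

theorem mem_normalizedNumericalRange_of_norm_lt_one (hT : T ∘ₗ T = 0) (hT0 : T ≠ 0) {z : 𝕜}
    (hz : ‖z‖ < 1) : z ∈ T.normalizedNumericalRange := by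
  obtain ⟨w, hw, hTw⟩ := exists_apply_ne_zero_inner_eq_zero hT hT0
  set s := √(1 - ‖z‖ ^ 2)
  have hs : 0 < s := Real.sqrt_pos.2 (by nlinarith [norm_nonneg z])
  have hs2 : s ^ 2 = 1 - ‖z‖ ^ 2 := Real.sq_sqrt (by nlinarith [norm_nonneg z])
  have hTwpos : 0 < ‖T w‖ := norm_pos_iff.2 hw
  have hwpos : 0 < ‖w‖ := norm_pos_iff.2 (ne_zero_of_map hw)
  -- chosen so that `‖c • T w + w‖ = ‖w‖ / s` and `conj c * ‖T w‖ = z * ‖w‖ / s`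
  set c : 𝕜 := conj z * ((‖w‖ / (‖T w‖ * s) : ℝ) : 𝕜)
  have hc : ‖c‖ = ‖z‖ * (‖w‖ / (‖T w‖ * s)) := by
    rw [norm_mul, RCLike.norm_conj, RCLike.norm_ofReal, abs_of_pos (by positivity)]
  have hx : ‖c • T w + w‖ = ‖w‖ / s := by
    refine (sq_eq_sq₀ (norm_nonneg _) (by positivity)).1 ?_
    rw [norm_smul_apply_add_sq hTw, hc]
    field_simp
    linarith
  refine ⟨c • T w + w, by rwa [apply_smul_apply_add hT], ?_⟩
  rw [normalizedInner_smul_apply_add hT hTw, hx]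
  have hw' : (‖w‖ : 𝕜) ≠ 0 := RCLike.ofReal_ne_zero.2 hwpos.ne'
  have hTw' : (‖T w‖ : 𝕜) ≠ 0 := RCLike.ofReal_ne_zero.2 hTwpos.ne'
  have hs' : (s : 𝕜) ≠ 0 := RCLike.ofReal_ne_zero.2 hs.ne'
  simp only [c, map_mul, RCLike.conj_conj, RCLike.conj_ofReal]
  push_cast
  field_simp

theorem normalizedNumericalRange_eq_ball (hT : T ∘ₗ T = 0) (hT0 : T ≠ 0) :
    T.normalizedNumericalRange = Metric.ball 0 1 := by
  ext z
  constructor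
  · rintro ⟨x, hx, rfl⟩
    exact mem_ball_zero_iff.2 (norm_normalizedInner_lt_one hT hx)
  · exact fun hz => mem_normalizedNumericalRange_of_norm_lt_one hT hT0 (mem_ball_zero_iff.1 hz)

end LinearMap

theorem stmt16 (A : Matrix (Fin 2) (Fin 2) ℂ) (hA : A ≠ 0)
    (hnil : A * A = 0) :
    FN A = Metric.ball (0 : ℂ) 1 := by
  -- `FN A` unfolds to `(Matrix.toEuclideanLin A).normalizedNumericalRange`
  refine LinearMap.normalizedNumericalRange_eq_ball ?_ ?_
  · rw [← Matrix.toLpLin_mul_same, hnil, map_zero]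
  · exact (map_ne_zero_iff _ (Matrix.toEuclideanLin).injective).2 hA
end

section
/- Let A ∈ M_n(ℂ) be a nonzero normal matrix whose only (possibly repeated) eigenvalues are 0 and a single nonzero value λ. Then F_N(A) is the half-open line segment (0, λ/|λ|] = {t·λ/|λ| : 0 < t ≤ 1}. -/
/-!
Since `A` is normal with spectrum `{0, λ}`, the operator `p = λ⁻¹ A` is normal with spectrum
`{0, 1}`, hence an orthogonal projection, and `p ≠ 0, 1`. For a projection,
`⟪x, p x⟫ = ‖p x‖²`, so `F_N(A)` at `x` equals `(‖p x‖ / ‖x‖) · λ / |λ|`. The ratio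
`‖p x‖ / ‖x‖` lies in `(0, 1]` whenever `p x ≠ 0`, and every `t ∈ (0, 1]` is attained by
`x = t w + √(1 - t²) u` with unit vectors `w ∈ range p`, `u ∈ ker p`.
-/

open Matrix

open scoped InnerProductSpace

theorem spectrum_inv_smul_of_spectrum_eq {𝕜 A : Type*} [Field 𝕜] [Ring A] [Algebra 𝕜 A] {a : A}
    {lam : 𝕜} (hlam : lam ≠ 0) (ha : spectrum 𝕜 a = {0, lam}) :
    spectrum 𝕜 (lam⁻¹ • a) = {0, 1} := by
  rw [show lam⁻¹ • a = (Units.mk0 lam hlam)⁻¹ • a from rfl, spectrum.unit_smul_eq_smul, ha,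
    Set.smul_set_insert, Set.smul_set_singleton]
  simp [Units.smul_def, hlam]

namespace IsStarProjection

variable {𝕜 E : Type*} [RCLike 𝕜] [NormedAddCommGroup E] [InnerProductSpace 𝕜 E]
  [CompleteSpace E] {p : E →L[𝕜] E}

theorem inner_apply_left (hp : IsStarProjection p) (x y : E) : ⟪p x, y⟫_𝕜 = ⟪x, p y⟫_𝕜 :=
  hp.isSelfAdjoint.isSymmetric x y

theorem apply_apply (hp : IsStarProjection p) (x : E) : p (p x) = p x :=
  congrArg (· x) hp.isIdempotentElem.eq

theorem inner_apply_right_eq_norm_sq (hp : IsStarProjection p) (x : E) :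
    ⟪x, p x⟫_𝕜 = (‖p x‖ ^ 2 : ℝ) := by
  rw [← hp.apply_apply x, ← hp.inner_apply_left, hp.apply_apply, inner_self_eq_norm_sq_to_K]
  norm_cast

theorem inner_apply_sub_self (hp : IsStarProjection p) (x y : E) : ⟪p x, y - p y⟫_𝕜 = 0 := by
  rw [inner_sub_right, ← hp.inner_apply_left, hp.apply_apply, sub_self]

theorem norm_sq_eq_add (hp : IsStarProjection p) (x : E) :
    ‖x‖ ^ 2 = ‖p x‖ ^ 2 + ‖x - p x‖ ^ 2 := by
  conv_lhs => rw [← add_sub_cancel (p x) x]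
  simpa only [sq] using
    norm_add_sq_eq_norm_sq_add_norm_sq_of_inner_eq_zero _ _ (hp.inner_apply_sub_self x x)

theorem norm_apply_le (hp : IsStarProjection p) (x : E) : ‖p x‖ ≤ ‖x‖ := by
  have := hp.norm_sq_eq_add x
  nlinarith [norm_nonneg (p x), norm_nonneg x, sq_nonneg ‖x - p x‖]

theorem norm_apply_div_norm_mem_Ioc (hp : IsStarProjection p) {x : E} (hpx : p x ≠ 0) :
    ‖p x‖ / ‖x‖ ∈ Set.Ioc 0 1 := by
  have hx : x ≠ 0 := by rintro rfl; simp at hpx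
  exact ⟨by positivity, (div_le_one (by positivity)).2 (hp.norm_apply_le x)⟩

theorem exists_norm_eq_one_and_norm_apply_eq (hp : IsStarProjection p) (hp0 : p ≠ 0)
    (hp1 : p ≠ 1) {t : ℝ} (ht0 : 0 ≤ t) (ht1 : t ≤ 1) : ∃ x : E, ‖x‖ = 1 ∧ ‖p x‖ = t := by
  obtain ⟨a, ha⟩ : ∃ a, p a ≠ 0 := by
    by_contra! h
    exact hp0 (ContinuousLinearMap.ext h)
  obtain ⟨b, hb⟩ : ∃ b, b - p b ≠ 0 := by
    by_contra! h
    exact hp1 (ContinuousLinearMap.ext fun b => (sub_eq_zero.mp (h b)).symm)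
  set w := (‖p a‖⁻¹ : 𝕜) • p a
  set u := (‖b - p b‖⁻¹ : 𝕜) • (b - p b)
  have hw : p w = w := by simp only [w, map_smul, hp.apply_apply]
  have hu : p u = 0 := by simp only [u, map_smul, map_sub, hp.apply_apply, sub_self, smul_zero]
  have hw1 : ‖w‖ = 1 := norm_smul_inv_norm ha
  have hu1 : ‖u‖ = 1 := norm_smul_inv_norm hb
  set x := (t : 𝕜) • w + (√(1 - t ^ 2) : 𝕜) • u
  have hpx : p x = (t : 𝕜) • w := by simp [x, hw, hu]
  have hpx_norm : ‖p x‖ = t := by simp [hpx, norm_smul, hw1, ht0]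
  refine ⟨x, ?_, hpx_norm⟩
  have hsq := hp.norm_sq_eq_add x
  have hx_sub : x - p x = (√(1 - t ^ 2) : 𝕜) • u := by rw [hpx]; simp [x]
  rw [hx_sub, hpx_norm, norm_smul, hu1, RCLike.norm_ofReal, abs_of_nonneg (Real.sqrt_nonneg _),
    mul_one, Real.sq_sqrt (by nlinarith), add_sub_cancel] at hsq
  exact (pow_eq_one_iff_of_nonneg (norm_nonneg x) two_ne_zero).mp hsq

end IsStarProjection

theorem fN_eq_of_isStarProjection {n : ℕ} {A : Matrix (Fin n) (Fin n) ℂ} {lam : ℂ} {p}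
    (hp : IsStarProjection p) (hA : toEuclideanCLM (𝕜 := ℂ) A = lam • p)
    (x : EuclideanSpace ℂ (Fin n)) :
    fN A x = ((‖p x‖ / ‖x‖ : ℝ) : ℂ) * (lam / ((‖lam‖ : ℝ) : ℂ)) := by
  have hAx : toEuclideanLin A x = lam • p x := congrArg (· x) hA
  rcases eq_or_ne lam 0 with rfl | hlam
  · simp [fN, hAx]
  rcases eq_or_ne (p x) 0 with hpx | hpx
  · simp [fN, hAx, hpx]
  have hx : x ≠ 0 := by rintro rfl; simp at hpx
  simp only [fN, hAx, inner_smul_right, hp.inner_apply_right_eq_norm_sq, norm_smul,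
    RCLike.ofReal_eq_complex_ofReal]
  have : (‖p x‖ : ℂ) ≠ 0 := by simpa using hpx
  have : (‖x‖ : ℂ) ≠ 0 := by simpa using hx
  have : (‖lam‖ : ℂ) ≠ 0 := by simpa using hlam
  push_cast
  field_simp

theorem stmt17 {n : ℕ} (A : Matrix (Fin n) (Fin n) ℂ) (hA : IsStarNormal A)
    (lam : ℂ) (hlam : lam ≠ 0) (hspec : spectrum ℂ A = {0, lam}) :
    FN A = {z : ℂ | ∃ t : ℝ, 0 < t ∧ t ≤ 1 ∧
      z = (t : ℂ) * (lam / ((‖lam‖ : ℝ) : ℂ))} := by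
  set p := lam⁻¹ • toEuclideanCLM (𝕜 := ℂ) A
  have hspec_p : spectrum ℂ p = {0, 1} := by
    refine spectrum_inv_smul_of_spectrum_eq hlam ?_
    rw [AlgEquiv.spectrum_eq (toEuclideanCLM (𝕜 := ℂ)) A, hspec]
  have hp : IsStarProjection p :=
    isStarProjection_iff_spectrum_subset_and_isStarNormal.mpr ⟨hspec_p.le, inferInstance⟩
  have hp0 : p ≠ 0 := fun h => by
    simpa [h, spectrum.mem_iff] using hspec_p.ge (Set.mem_insert_of_mem 0 rfl)
  have hp1 : p ≠ 1 := fun h =>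
    (spectrum.zero_mem_iff ℂ).mp (h ▸ hspec_p.ge (Set.mem_insert 0 {1})) isUnit_one
  have hAp : toEuclideanCLM (𝕜 := ℂ) A = lam • p := by simp [p, smul_smul, hlam]
  have hAx (x) : toEuclideanLin A x = lam • p x := congrArg (· x) hAp
  ext z
  simp only [FN, fN_eq_of_isStarProjection hp hAp, hAx, Set.mem_ofPred_eq, ne_eq, smul_eq_zero,
    hlam, false_or]
  constructor
  · rintro ⟨x, hpx, rfl⟩
    obtain ⟨h0, h1⟩ := hp.norm_apply_div_norm_mem_Ioc hpx
    exact ⟨_, h0, h1, rfl⟩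
  · rintro ⟨t, ht0, ht1, rfl⟩
    obtain ⟨x, hx, hpx⟩ := hp.exists_norm_eq_one_and_norm_apply_eq hp0 hp1 ht0.le ht1
    refine ⟨x, ?_, by rw [hx, hpx, div_one]⟩
    rw [← norm_eq_zero, hpx]
    exact ht0.ne'
end
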